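/- arXiv:2103.11227 — 3 statements merged into one kernel-verified Lean document; each statement's English description precedes it below -/
import Mathlib

section
/- Let w ∈ CZ_n with ⟨w⟩_0 ≠ 0 and let k ∈ ℕ, k ≥ 1. Then there exists u ∈ CZ_n with ⟨u⟩_0 ≠ 0 such that u^k = w. -/
noncomputable section

/-- The ideal of squares of generators defining the zeon algebra. -/
def zeonIdeal (n : ℕ) : Ideal (MvPolynomial (Fin n) ℂ) :=
  Ideal.span (Set.range fun i : Fin n => (MvPolynomial.X i : MvPolynomial (Fin n) ℂ) ^ 2)

/-- The `n`-particle complex zeon algebra `CZ_n`. -/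
abbrev Zeon (n : ℕ) := MvPolynomial (Fin n) ℂ ⧸ zeonIdeal n

/-- The scalar part `⟨u⟩₀` of a zeon, as a `ℂ`-algebra homomorphism. -/
def scalarPart (n : ℕ) : Zeon n →ₐ[ℂ] ℂ :=
  Ideal.Quotient.liftₐ (zeonIdeal n) (MvPolynomial.aeval fun _ => (0 : ℂ)) (by
    intro a ha
    have h : zeonIdeal n ≤ RingHom.ker
        (MvPolynomial.aeval (R := ℂ) fun _ : Fin n => (0 : ℂ)).toRingHom := by
      rw [zeonIdeal, Ideal.span_le]
      rintro _ ⟨i, rfl⟩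
      simp [RingHom.mem_ker]
    exact h ha)

/-- The dual (nilpotent) part `Du = u - ⟨u⟩₀`. -/
def dualPart (n : ℕ) (u : Zeon n) : Zeon n := u - algebraMap ℂ (Zeon n) (scalarPart n u)

/-- The generator `ζ_i`. -/
def zeta (n : ℕ) (i : Fin n) : Zeon n := Ideal.Quotient.mk _ (MvPolynomial.X i)

/-- The basis blade `ζ_I`. -/
def blade (n : ℕ) (I : Finset (Fin n)) : Zeon n :=
  Ideal.Quotient.mk _ (∏ i ∈ I, MvPolynomial.X i)

/-!
The scalar part `CZ_n → ℂ` is surjective with kernel generated by the nilpotent generators `ζ_i`,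
so this kernel is a nilpotent ideal. A ring is adically complete, hence Henselian, at a nilpotent
ideal. Choosing `b ∈ ℂ` with `b ^ k = ⟨w⟩₀`, the constant `b` is a simple root of `X ^ k - w`
modulo the kernel (its derivative `k b ^ (k - 1)` is a nonzero scalar), and Hensel's lemma lifts it
to a genuine root `u`. Finally `⟨u⟩₀ ^ k = ⟨w⟩₀ ≠ 0`.
-/

open Polynomial

theorem IsAdicComplete.of_isNilpotent {R M : Type*} [CommRing R] [AddCommGroup M] [Module R M]
    {I : Ideal R} (hI : IsNilpotent I) : IsAdicComplete I M := by
  obtain ⟨N, hN⟩ := hI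
  have smul_top_eq_bot : (I ^ N • ⊤ : Submodule R M) = ⊥ := by
    rw [hN, Ideal.zero_eq_bot, Submodule.bot_smul]
  refine { haus' := fun x hx => ?_, prec' := fun f hf => ⟨f N, fun n => ?_⟩ }
  · simpa [smul_top_eq_bot, SModEq.bot] using hx N
  · rcases le_total n N with hnN | hNn
    · exact hf hnN
    · have hfN := hf hNn
      rw [smul_top_eq_bot, SModEq.bot] at hfN
      rw [hfN]

theorem HenselianRing.exists_pow_eq {R : Type*} [CommRing R] {I : Ideal R} [HenselianRing R I]
    {k : ℕ} (hk : k ≠ 0) {w a₀ : R} (h₁ : a₀ ^ k - w ∈ I)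
    (h₂ : IsUnit (Ideal.Quotient.mk I ((k : R) * a₀ ^ (k - 1)))) : ∃ u : R, u ^ k = w := by
  obtain ⟨u, hu, -⟩ := HenselianRing.is_henselian (X ^ k - C w) (monic_X_pow_sub_C w hk) a₀
    (by simpa using h₁) (by simpa [derivative_X_pow] using h₂)
  exact ⟨u, by simpa [sub_eq_zero] using hu⟩

namespace Zeon

variable {n : ℕ}

theorem ker_scalarPart_le_map_idealOfVars :
    RingHom.ker (scalarPart n) ≤
      (MvPolynomial.idealOfVars (Fin n) ℂ).map (Ideal.Quotient.mk (zeonIdeal n)) := by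
  intro x hx
  obtain ⟨p, rfl⟩ := Ideal.Quotient.mk_surjective x
  have hp : MvPolynomial.constantCoeff p = 0 := by
    replace hx : MvPolynomial.aeval (fun _ : Fin n => (0 : ℂ)) p = 0 := hx
    simpa [MvPolynomial.aeval_zero'] using hx
  refine Ideal.mem_map_of_mem _ ?_
  rw [← pow_one (MvPolynomial.idealOfVars _ _), MvPolynomial.mem_pow_idealOfVars_iff']
  intro m hm
  obtain rfl : m = 0 := by simpa [Finsupp.degree_eq_zero_iff] using hm
  exact hp

theorem ker_scalarPart_le_nilradical : RingHom.ker (scalarPart n) ≤ nilradical (Zeon n) := by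
  refine ker_scalarPart_le_map_idealOfVars.trans ?_
  rw [Ideal.map_span, Ideal.span_le]
  rintro _ ⟨_, ⟨i, rfl⟩, rfl⟩
  refine mem_nilradical.mpr ⟨2, ?_⟩
  rw [← map_pow, Ideal.Quotient.eq_zero_iff_mem]
  exact Ideal.subset_span ⟨i, rfl⟩

theorem isNilpotent_ker_scalarPart : IsNilpotent (RingHom.ker (scalarPart n)) :=
  (Ideal.FG.isNilpotent_iff_le_nilradical (IsNoetherian.noetherian _)).mpr
    ker_scalarPart_le_nilradical

instance : HenselianRing (Zeon n) (RingHom.ker (scalarPart n)) :=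
  have : IsAdicComplete (RingHom.ker (scalarPart n)) (Zeon n) :=
    .of_isNilpotent isNilpotent_ker_scalarPart
  inferInstance

end Zeon

/-- existence of k-th roots of invertible zeons. -/
theorem stmt3 (n : ℕ) (w : Zeon n) (hw : scalarPart n w ≠ 0) (k : ℕ) (hk : 1 ≤ k) :
    ∃ u : Zeon n, scalarPart n u ≠ 0 ∧ u ^ k = w := by
  have hk0 : k ≠ 0 := Nat.one_le_iff_ne_zero.mp hk
  obtain ⟨b, hb⟩ := IsAlgClosed.exists_pow_nat_eq (scalarPart n w) hk
  have hb0 : b ≠ 0 := ne_zero_pow hk0 (hb ▸ hw)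
  have hderiv : IsUnit ((k : Zeon n) * algebraMap ℂ (Zeon n) b ^ (k - 1)) := by
    convert (Ne.isUnit (mul_ne_zero (Nat.cast_ne_zero.mpr hk0) (pow_ne_zero (k - 1) hb0))).map
      (algebraMap ℂ (Zeon n)) using 1
    simp
  obtain ⟨u, hu⟩ := HenselianRing.exists_pow_eq (I := RingHom.ker (scalarPart n))
    (w := w) (a₀ := algebraMap ℂ (Zeon n) b) hk0 (by simp [RingHom.mem_ker, hb]) (hderiv.map _)
  exact ⟨u, ne_zero_pow hk0 (by rwa [← map_pow, hu]), hu⟩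
end
end

section
/- Let α ∈ CZ_n with ⟨α⟩_0 ≠ 0 and k ≥ 1. Then α has exactly k distinct k-th roots in CZ_n; that is, the set {u ∈ CZ_n : u^k = α} has cardinality k. -/
noncomputable section

open Polynomial

section NilpotentKernel

variable {K A : Type*} [Field K] [CommRing A] [Algebra K A] {φ : A →ₐ[K] K}

theorem isNilpotent_sub_iff_map_eq (hφ : ∀ x, φ x = 0 → IsNilpotent x) {x y : A} :
    IsNilpotent (x - y) ↔ φ x = φ y :=
  ⟨fun h => sub_eq_zero.mp (by simpa using (h.map φ).eq_zero),
    fun h => hφ _ (by simp [h])⟩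

/-- Hensel lifting: `X ^ k - α` has the unit derivative `k c ^ (k - 1)` at the constant `c`,
and is nilpotent there because its image under `φ` vanishes. -/
theorem existsUnique_pow_eq_and_map_eq (hφ : ∀ x, φ x = 0 → IsNilpotent x) {k : ℕ}
    (hk : (k : K) ≠ 0) {α : A} (hα : φ α ≠ 0) {c : K} (hc : c ^ k = φ α) :
    ∃! u : A, u ^ k = α ∧ φ u = c := by
  have hc0 : c ≠ 0 := by
    rintro rfl
    exact hα (hc.symm.trans (zero_pow (by rintro rfl; simp at hk)))
  have hroot : IsNilpotent (aeval (algebraMap K A c) (X ^ k - C α)) :=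
    hφ _ (by simp [hc])
  have hderiv : IsUnit (aeval (algebraMap K A c) (derivative (X ^ k - C α))) := by
    have : IsUnit (algebraMap K A (k * c ^ (k - 1))) :=
      (isUnit_iff_ne_zero.mpr (mul_ne_zero hk (pow_ne_zero _ hc0))).map _
    simpa [derivative_X_pow] using this
  obtain ⟨u, ⟨hu_near, hu_root⟩, hu_unique⟩ :=
    existsUnique_nilpotent_sub_and_aeval_eq_zero hroot hderiv
  have hnear : ∀ v : A, IsNilpotent (algebraMap K A c - v) ↔ φ v = c := by
    simp [isNilpotent_sub_iff_map_eq hφ, eq_comm]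
  refine ⟨u, ⟨by simpa [sub_eq_zero] using hu_root, (hnear u).mp hu_near⟩, ?_⟩
  rintro v ⟨hv, hvc⟩
  exact hu_unique v ⟨(hnear v).mpr hvc, by simp [hv]⟩

theorem bijOn_setOf_pow_eq (hφ : ∀ x, φ x = 0 → IsNilpotent x) {k : ℕ} (hk : (k : K) ≠ 0)
    {α : A} (hα : φ α ≠ 0) : Set.BijOn φ {u | u ^ k = α} {c | c ^ k = φ α} := by
  refine ⟨fun u (hu : u ^ k = α) => show φ u ^ k = φ α by rw [← map_pow, hu],
    fun u (hu : u ^ k = α) v hv huv => ?_, fun c hc => ?_⟩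
  · have hroot : φ u ^ k = φ α := by rw [← map_pow, hu]
    exact (existsUnique_pow_eq_and_map_eq hφ hk hα hroot).unique ⟨hu, rfl⟩ ⟨hv, huv.symm⟩
  · obtain ⟨u, ⟨hu, huc⟩, -⟩ := existsUnique_pow_eq_and_map_eq hφ hk hα hc
    exact ⟨u, hu, huc⟩

end NilpotentKernel

theorem IsPrimitiveRoot.ncard_setOf_pow_eq {R : Type*} [CommRing R] [IsDomain R] {ζ : R}
    {k : ℕ} (hζ : IsPrimitiveRoot ζ k) (hk : k ≠ 0) {a : R} (ha : a ≠ 0)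
    (h : ∃ c, c ^ k = a) : {c : R | c ^ k = a}.ncard = k := by
  classical
  have hset : {c : R | c ^ k = a} = ↑(nthRoots k a).toFinset := by
    ext c
    simp [mem_nthRoots (Nat.pos_of_ne_zero hk)]
  rw [hset, Set.ncard_coe_finset, Multiset.toFinset_card_of_nodup (hζ.nthRoots_nodup ha),
    hζ.card_nthRoots, if_pos h]

theorem isNilpotent_zeta (n : ℕ) (i : Fin n) : IsNilpotent (zeta n i) :=
  ⟨2, by rw [zeta, ← map_pow, Ideal.Quotient.eq_zero_iff_mem]; exact Ideal.subset_span ⟨i, rfl⟩⟩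

/-- Modulo the nilradical, every zeon agrees with its scalar part: the two algebra maps
`Zeon n → Zeon n ⧸ nilradical` agree on the nilpotent generators. -/
theorem isNilpotent_dualPart (n : ℕ) (u : Zeon n) : IsNilpotent (dualPart n u) := by
  let π := Ideal.Quotient.mkₐ ℂ (nilradical (Zeon n))
  have hπ : π = π.comp ((Algebra.ofId ℂ (Zeon n)).comp (scalarPart n)) := by
    refine Ideal.Quotient.algHom_ext _ (MvPolynomial.algHom_ext fun i => ?_)
    have hzeta : π (zeta n i) = 0 :=
      Ideal.Quotient.eq_zero_iff_mem.mpr (mem_nilradical.mpr (isNilpotent_zeta n i))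
    have hscalar : scalarPart n (zeta n i) = 0 :=
      show MvPolynomial.aeval (fun _ => (0 : ℂ)) (MvPolynomial.X i) = 0 by simp
    change π (zeta n i) = algebraMap ℂ _ (scalarPart n (zeta n i))
    rw [hzeta, hscalar, map_zero]
  rw [dualPart, ← mem_nilradical, ← Ideal.Quotient.eq]
  exact AlgHom.congr_fun hπ u

theorem isNilpotent_of_scalarPart_eq_zero {n : ℕ} {u : Zeon n} (hu : scalarPart n u = 0) :
    IsNilpotent u := by
  simpa [dualPart, hu] using isNilpotent_dualPart n u

/-- an invertible zeon has exactly `k` distinct `k`-th roots. -/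
theorem stmt4 (n : ℕ) (α : Zeon n) (hα : scalarPart n α ≠ 0) (k : ℕ) (hk : 1 ≤ k) :
    {u : Zeon n | u ^ k = α}.ncard = k := by
  have hk0 : k ≠ 0 := by omega
  rw [(bijOn_setOf_pow_eq (fun _ => isNilpotent_of_scalarPart_eq_zero)
    (Nat.cast_ne_zero.mpr hk0) hα).ncard_eq]
  exact (Complex.isPrimitiveRoot_exp k hk0).ncard_setOf_pow_eq hk0 hα
    (IsAlgClosed.exists_pow_nat_eq _ (Nat.pos_of_ne_zero hk0))
end
end

section
/- Let f be a nonzero complex polynomial with a zero r of multiplicity at least 2, and n ≥ 1. Then the zeon extension φ of f to CZ_n has infinitely many zeros; in particular φ(r + a ζ_1) = 0 for every a ∈ ℂ. -/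
noncomputable section

theorem Polynomial.aeval_add_eq_zero_of_sq_dvd {R A : Type*} [CommRing R] [CommRing A]
    [Algebra R A] {f : Polynomial R} {r : R} (hr : (Polynomial.X - Polynomial.C r) ^ 2 ∣ f)
    {ε : A} (hε : ε ^ 2 = 0) : Polynomial.aeval (algebraMap R A r + ε) f = 0 := by
  obtain ⟨g, rfl⟩ := hr
  simp [hε]

lemma zeta_sq (n : ℕ) (i : Fin n) : zeta n i ^ 2 = 0 := by
  rw [zeta, ← map_pow, Ideal.Quotient.eq_zero_iff_mem]
  exact Ideal.subset_span ⟨i, rfl⟩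

def toDualNumber (n : ℕ) : Zeon n →ₐ[ℂ] DualNumber ℂ :=
  Ideal.Quotient.liftₐ (zeonIdeal n) (MvPolynomial.aeval fun _ => DualNumber.eps) <| by
    have h : zeonIdeal n ≤ RingHom.ker
        (MvPolynomial.aeval (R := ℂ) fun _ : Fin n => (DualNumber.eps : DualNumber ℂ)) := by
      rw [zeonIdeal, Ideal.span_le]
      rintro _ ⟨i, rfl⟩
      simp [RingHom.mem_ker, sq]
    exact fun a ha => h ha

lemma toDualNumber_zeta (n : ℕ) (i : Fin n) : toDualNumber n (zeta n i) = DualNumber.eps :=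
  MvPolynomial.aeval_X _ i

lemma zeta_ne_zero (n : ℕ) (i : Fin n) : zeta n i ≠ 0 := fun h => by
  simpa [toDualNumber_zeta] using congrArg (TrivSqZeroExt.snd ∘ toDualNumber n) h

theorem stmt13_general (n : ℕ) (hn : 1 ≤ n) (f : Polynomial ℂ) (r : ℂ)
    (hr : (Polynomial.X - Polynomial.C r) ^ 2 ∣ f) :
    {w : Zeon n | Polynomial.aeval w f = 0}.Infinite ∧
    ∀ a : ℂ, Polynomial.aeval
      (algebraMap ℂ (Zeon n) r + a • zeta n ⟨0, hn⟩) f = 0 := by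
  have zeros : ∀ a : ℂ, Polynomial.aeval
      (algebraMap ℂ (Zeon n) r + a • zeta n ⟨0, hn⟩) f = 0 := fun a =>
    Polynomial.aeval_add_eq_zero_of_sq_dvd hr (by rw [smul_pow, zeta_sq, smul_zero])
  have injective : Function.Injective
      fun a : ℂ => algebraMap ℂ (Zeon n) r + a • zeta n ⟨0, hn⟩ :=
    (add_right_injective _).comp (smul_left_injective ℂ (zeta_ne_zero n _))
  exact ⟨Set.infinite_of_injective_forall_mem injective zeros, zeros⟩

/-- a multiple zero of `f` yields infinitely many zeon zeros. -/
theorem stmt13 (n : ℕ) (hn : 1 ≤ n) (f : Polynomial ℂ) (hf : f ≠ 0) (r : ℂ)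
    (hr : (Polynomial.X - Polynomial.C r) ^ 2 ∣ f) :
    {w : Zeon n | Polynomial.aeval w f = 0}.Infinite ∧
    ∀ a : ℂ, Polynomial.aeval
      (algebraMap ℂ (Zeon n) r + a • zeta n ⟨0, hn⟩) f = 0 :=
  stmt13_general n hn f r hr
end
end
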